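/- A vector of the form ((±1)^{21}, 1, 1, −3) ∈ Z^24 lies in the Leech lattice if and only if the set of positions among {1,…,21} carrying −1 is a codeword of the extended binary Golay code C₂₄ whose support is disjoint from {22,23,24}. -/

import Mathlib

open scoped BigOperators

/-- A generator matrix of the extended binary Golay code (MOG coordinates). -/
def golayMatrix : Matrix (Fin 12) (Fin 24) (ZMod 2) :=
  !![0, 0, 0, 0, 0, 0, 0, 0, 0, 0, 0, 0, 0, 0, 0, 0, 1, 1, 1, 1, 1, 1, 1, 1;
    0, 0, 0, 0, 0, 0, 0, 0, 0, 0, 0, 0, 1, 1, 1, 1, 0, 0, 0, 0, 1, 1, 1, 1;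
    0, 0, 0, 0, 0, 0, 0, 0, 0, 0, 1, 1, 0, 0, 1, 1, 0, 0, 1, 1, 0, 0, 1, 1;
    0, 0, 0, 0, 0, 0, 0, 0, 0, 1, 0, 1, 0, 1, 0, 1, 0, 1, 0, 1, 0, 1, 0, 1;
    0, 0, 0, 0, 0, 0, 0, 0, 1, 0, 0, 1, 0, 1, 1, 0, 0, 1, 1, 0, 1, 0, 0, 1;
    0, 0, 0, 0, 0, 0, 1, 1, 0, 0, 0, 0, 0, 0, 1, 1, 0, 1, 1, 0, 0, 1, 0, 1;
    0, 0, 0, 0, 0, 1, 0, 1, 0, 0, 0, 0, 0, 1, 0, 1, 0, 0, 1, 1, 0, 1, 1, 0;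
    0, 0, 0, 0, 1, 0, 0, 1, 0, 0, 0, 0, 0, 1, 1, 0, 0, 1, 0, 1, 1, 1, 0, 0;
    0, 0, 0, 1, 0, 0, 0, 1, 0, 0, 0, 1, 0, 0, 0, 1, 0, 1, 1, 1, 1, 0, 0, 0;
    0, 0, 1, 0, 0, 0, 0, 1, 0, 0, 0, 1, 0, 0, 1, 0, 0, 0, 1, 0, 1, 1, 1, 0;
    0, 1, 0, 0, 0, 0, 0, 1, 0, 0, 0, 1, 0, 1, 0, 0, 0, 0, 0, 1, 1, 0, 1, 1;
    1, 0, 0, 0, 0, 0, 0, 1, 0, 0, 0, 1, 0, 1, 1, 1, 0, 1, 0, 0, 0, 0, 1, 0]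

/-- The extended binary Golay code `C₂₄`. -/
def GolayCode : Submodule (ZMod 2) (Fin 24 → ZMod 2) :=
  Submodule.span (ZMod 2) (Set.range fun i => golayMatrix i)

/-- Membership in the Leech lattice `Λ₂₄ ⊂ ℤ²⁴` (coordinates scaled by `√8`),
via the standard congruence characterization. -/
def IsLeech (x : Fin 24 → ℤ) : Prop :=
  ∃ m : ℤ, (m = 0 ∨ m = 1) ∧ (∀ i, (2:ℤ) ∣ (x i - m)) ∧
    ((fun i => if (4:ℤ) ∣ (x i - m - 2) then (1 : ZMod 2) else 0) ∈ GolayCode) ∧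
    (8:ℤ) ∣ ((∑ i, x i) - 4 * m)

/-- The inner product `⟨x, y⟩ = (Σ xᵢ yᵢ)/8` on the Leech lattice. -/
def leechInner (x y : Fin 24 → ℤ) : ℚ := (∑ i, (x i : ℚ) * (y i : ℚ)) / 8

/-- The lattice point `A = (0²¹, 4, 0, −4)`. -/
def vA : Fin 24 → ℤ := fun i => if i.val = 21 then 4 else if i.val = 23 then -4 else 0

/-- The lattice point `B = (0²¹, 0, 4, −4)`. -/
def vB : Fin 24 → ℤ := fun i => if i.val = 22 then 4 else if i.val = 23 then -4 else 0

/-- `T_AB`: lattice points `T` with `|OT| = |AT| = |BT| = 2`. -/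
def TAB : Set (Fin 24 → ℤ) :=
  {T | IsLeech T ∧ leechInner T T = 4 ∧
       leechInner (T - vA) (T - vA) = 4 ∧ leechInner (T - vB) (T - vB) = 4}

/-- Integer weight of a binary word. -/
def wtZ (c : Fin 24 → ZMod 2) : ℤ := ∑ i, ((c i).val : ℤ)

lemma val_add_int : ∀ a b : ZMod 2,
    (((a + b).val : ℤ)) = (a.val : ℤ) + (b.val : ℤ) - 2 * ((a * b).val : ℤ) := by
  decide

lemma valcast : ∀ a : ZMod 2, ((a.val : ℕ) : ZMod 2) = a := by decide

lemma wtZ_add (a b : Fin 24 → ZMod 2) :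
    wtZ (a + b) = wtZ a + wtZ b - 2 * ∑ i, (((a i) * (b i)).val : ℤ) := by
  simp only [wtZ, Pi.add_apply, Finset.mul_sum]
  rw [← Finset.sum_add_distrib, ← Finset.sum_sub_distrib]
  exact Finset.sum_congr rfl fun i _ => val_add_int _ _

set_option maxRecDepth 10000 in
lemma gen_orth : ∀ j k : Fin 12, ∑ i, golayMatrix j i * golayMatrix k i = 0 := by
  decide

set_option maxRecDepth 10000 in
lemma gen_wt : ∀ j : Fin 12, (∑ i, (golayMatrix j i).val) % 4 = 0 := by
  decide

lemma golay_orth {a b : Fin 24 → ZMod 2} (ha : a ∈ GolayCode) (hb : b ∈ GolayCode) :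
    ∑ i, a i * b i = 0 := by
  induction ha using Submodule.span_induction with
  | mem u hu =>
    induction hb using Submodule.span_induction with
    | mem v hv =>
      obtain ⟨j, rfl⟩ := hu; obtain ⟨k, rfl⟩ := hv
      exact gen_orth j k
    | zero => simp
    | add v w _ _ hv hw =>
      simp only [Pi.add_apply, mul_add, Finset.sum_add_distrib, hv, hw, add_zero]
    | smul c v _ hv =>
      simp only [Pi.smul_apply, smul_eq_mul, mul_left_comm, ← Finset.mul_sum, hv, mul_zero]
  | zero => simp
  | add u v _ _ hu hv =>
    simp only [Pi.add_apply, add_mul, Finset.sum_add_distrib, hu, hv, add_zero]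
  | smul c u _ hu =>
    simp only [Pi.smul_apply, smul_eq_mul, mul_assoc, ← Finset.mul_sum, hu, mul_zero]

lemma golay_dot_even {a b : Fin 24 → ZMod 2} (ha : a ∈ GolayCode) (hb : b ∈ GolayCode) :
    (2:ℤ) ∣ ∑ i, (((a i) * (b i)).val : ℤ) := by
  have h0 : ((∑ i, ((a i) * (b i)).val : ℕ) : ZMod 2) = 0 := by
    push_cast
    rw [Finset.sum_congr rfl fun i _ => valcast (a i * b i)]
    exact golay_orth ha hb
  have h1 := (ZMod.natCast_eq_zero_iff _ 2).mp h0
  have h2 : (2:ℤ) ∣ ((∑ i, ((a i) * (b i)).val : ℕ) : ℤ) := Int.natCast_dvd_natCast.mpr h1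
  rw [Nat.cast_sum] at h2; exact h2

/-- the Golay code is doubly even -/
lemma golay_doubly_even {c : Fin 24 → ZMod 2} (hc : c ∈ GolayCode) : (4:ℤ) ∣ wtZ c := by
  induction hc using Submodule.span_induction with
  | mem u hu =>
    obtain ⟨j, rfl⟩ := hu
    have h4 : 4 ∣ ∑ i, (golayMatrix j i).val := Nat.dvd_of_mod_eq_zero (gen_wt j)
    have h5 : (4:ℤ) ∣ ((∑ i, (golayMatrix j i).val : ℕ) : ℤ) := Int.natCast_dvd_natCast.mpr h4
    rw [Nat.cast_sum] at h5; exact h5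
  | zero => exact ⟨0, by rw [wtZ]; simp only [Pi.zero_apply, ZMod.val_zero, Nat.cast_zero, Finset.sum_const_zero, mul_zero]⟩
  | add u v hu hv ihu ihv =>
    rw [wtZ_add]
    obtain ⟨s, hs⟩ := ihu; obtain ⟨t, ht⟩ := ihv
    obtain ⟨d, hd⟩ := golay_dot_even hu hv
    rw [hs, ht, hd]; ring_nf; omega
  | smul a u hu ihu =>
    fin_cases a
    · show 4 ∣ wtZ ((0 : ZMod 2) • u)
      rw [zero_smul]; exact ⟨0, by rw [wtZ]; simp only [Pi.zero_apply, ZMod.val_zero, Nat.cast_zero, Finset.sum_const_zero, mul_zero]⟩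
    · show 4 ∣ wtZ ((1 : ZMod 2) • u)
      rw [one_smul]; exact ihu


/-- a vector of the form `((±1)²¹, 1, 1, −3)` lies in the Leech
lattice iff the set of positions among `{1,…,21}` carrying `−1` is a codeword
of the Golay code (its support being disjoint from `{22,23,24}`). -/
theorem type3_mem_leech_iff (x : Fin 24 → ℤ)
    (h21 : ∀ i : Fin 24, i.val < 21 → x i = 1 ∨ x i = -1)
    (h22 : x ⟨21, by omega⟩ = 1) (h23 : x ⟨22, by omega⟩ = 1)
    (h24 : x ⟨23, by omega⟩ = -3) :
    IsLeech x ↔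
      (fun i : Fin 24 => if i.val < 21 ∧ x i = -1 then (1 : ZMod 2) else 0)
        ∈ GolayCode := by
  set c : Fin 24 → ZMod 2 := fun i => if i.val < 21 ∧ x i = -1 then (1 : ZMod 2) else 0 with hc
  have xbig : ∀ i : Fin 24, 21 ≤ i.val →
      (i.val = 23 ∧ x i = -3) ∨ (i.val ≠ 23 ∧ x i = 1) := by
    intro i h
    have h3 : i.val = 21 ∨ i.val = 22 ∨ i.val = 23 := by omega
    rcases h3 with h' | h' | h'
    · exact Or.inr ⟨by omega, by rw [show i = ⟨21, by omega⟩ from Fin.ext h']; exact h22⟩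
    · exact Or.inr ⟨by omega, by rw [show i = ⟨22, by omega⟩ from Fin.ext h']; exact h23⟩
    · exact Or.inl ⟨h', by rw [show i = ⟨23, by omega⟩ from Fin.ext h']; exact h24⟩
  -- the two indicator vectors agree when m = 1
  have key : (fun i => if (4:ℤ) ∣ (x i - 1 - 2) then (1 : ZMod 2) else 0) = c := by
    funext i
    rcases lt_or_ge i.val 21 with h | h
    · rcases h21 i h with hx | hx
      · have h1 : ¬ (4:ℤ) ∣ (x i - 1 - 2) := by rw [hx]; decide
        have h2 : c i = 0 := by simp [hc, hx]
        simp [h1, h2]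
      · have h1 : (4:ℤ) ∣ (x i - 1 - 2) := by rw [hx]; decide
        have h2 : c i = 1 := by simp [hc, hx, h]
        simp [h1, h2]
    · have h2 : c i = 0 := by simp [hc, show ¬ i.val < 21 by omega]
      rcases xbig i h with ⟨_, hx⟩ | ⟨_, hx⟩
      · have h1 : ¬ (4:ℤ) ∣ (x i - 1 - 2) := by rw [hx]; decide
        simp [h1, h2]
      · have h1 : ¬ (4:ℤ) ∣ (x i - 1 - 2) := by rw [hx]; decide
        simp [h1, h2]
  -- pointwise formula for x in terms of c
  have xval : ∀ i : Fin 24, x i = (if i.val = 23 then -3 else 1) - 2 * ((c i).val : ℤ) := by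
    intro i
    rcases lt_or_ge i.val 21 with h | h
    · have h3 : ¬ i.val = 23 := by omega
      rcases h21 i h with hx | hx
      · have h2 : c i = 0 := by simp [hc, hx]
        rw [hx, h2]; simp [h3]
      · have h2 : c i = 1 := by simp [hc, hx, h]
        rw [hx, h2]; simp [h3, ZMod.val_one]
    · have h2 : c i = 0 := by simp [hc, show ¬ i.val < 21 by omega]
      rcases xbig i h with ⟨h3, hx⟩ | ⟨h3, hx⟩ <;> rw [hx, h2] <;> simp [h3]
  have sum_x : (∑ i, x i) = 20 - 2 * wtZ c := by
    rw [Finset.sum_congr rfl fun i _ => xval i, Finset.sum_sub_distrib]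
    have h20 : (∑ i : Fin 24, if i.val = 23 then (-3:ℤ) else 1) = 20 := by decide
    rw [h20, wtZ, Finset.mul_sum]
  constructor
  · rintro ⟨m, hm, hpar, hgol, -⟩
    have hm1 : m = 1 := by
      rcases hm with rfl | rfl
      · exfalso; have := hpar ⟨21, by omega⟩; rw [h22] at this; omega
      · rfl
    rw [hm1, key] at hgol
    exact hgol
  · intro hgol
    refine ⟨1, Or.inr rfl, ?_, ?_, ?_⟩
    · intro i
      rw [xval i]
      have hv : (c i).val = 0 ∨ (c i).val = 1 := by
        have := ZMod.val_lt (c i); omega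
      rcases hv with h | h <;> rw [h] <;> by_cases h' : i.val = 23 <;> simp [h'] <;> omega
    · rw [key]; exact hgol
    · rw [sum_x]
      obtain ⟨t, ht⟩ := golay_doubly_even hgol
      rw [ht]; ring_nf; omega
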